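/- Let 𝒢 be the continuous graph of a connected weighted graph G, let s be a point of 𝒢, and let T_s be a shortest-path tree rooted at s spanning V(G). For each edge xy ∈ E(G) \ E(T_s), let ω_s(xy) = ( d(s,x) + ℓ(xy) + d(s,y) ) / 2. Then the eccentricity of s in 𝒢 satisfies ecc(s,𝒢) = max( max_{x ∈ V(G)} d(s,x), max_{xy ∉ E(T_s)} ω_s(xy) ). -/

import Mathlib

/-!
Write `d x` for the distance from `s` to a vertex `x`. The point of edge `uv` at offset `lam` is
at distance `min (d u + lam) (d v + ℓ u v - lam)`, which never exceeds
`ω(uv) = (d u + ℓ u v + d v) / 2` and attains it at the offset where the two routes meet; since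
`|d u - d v| ≤ ℓ u v`, that offset lies on the edge, and offset `0` recovers the vertices. On a
tree edge the distances differ by the full `ℓ u v`: removing the edge (a bridge) separates `s`
from one endpoint, and a potential equal to the distance on the side of `s`, shifted by `ℓ u v`
on the other side, shows that every walk to that endpoint pays for crossing the edge. So points
on tree edges are never farther than the farther endpoint.
-/

open SimpleGraph

variable {V : Type*}

/-- Length of a walk in a weighted graph: the sum of the lengths of its edges,
counted with multiplicity. -/
noncomputable def walkLen (ℓ : V → V → ℝ) {G : SimpleGraph V} {a b : V} (w : G.Walk a b) : ℝ :=
  (w.darts.map (fun d => ℓ d.toProd.1 d.toProd.2)).sum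

/-- Shortest-path distance in the weighted graph: infimum of walk lengths. -/
noncomputable def gdist (G : SimpleGraph V) (ℓ : V → V → ℝ) (a b : V) : ℝ :=
  sInf {x | ∃ w : G.Walk a b, walkLen ℓ w = x}

/-- Endpoint (`u` or `v`) of the edge carrying a point `(u, v, lam)` of the continuous graph. -/
def ept (p : V × V × ℝ) : Bool → V := fun i => if i then p.2.1 else p.1

/-- Offset of a point `(u, v, lam)` of the continuous graph to the chosen endpoint of its edge. -/
def off (ℓ : V → V → ℝ) (p : V × V × ℝ) : Bool → ℝ :=
  fun i => if i then ℓ p.1 p.2.1 - p.2.2 else p.2.2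

/-- Geodesic distance between two points of the continuous graph `𝒢` of `G`:
a point `(u, v, lam)` lies on edge `uv` at distance `lam` along the edge from `u`.
It is the infimum of the lengths of all connections: leave the first edge through one of
its endpoints, walk in `G`, and enter the second edge through one of its endpoints;
or, if both points lie on the same edge, travel directly along that edge. -/
noncomputable def pdist (G : SimpleGraph V) (ℓ : V → V → ℝ) (p q : V × V × ℝ) : ℝ :=
  sInf ({x | ∃ (i j : Bool) (w : G.Walk (ept p i) (ept q j)),
        x = off ℓ p i + walkLen ℓ w + off ℓ q j}
    ∪ {x | (p.1, p.2.1) = (q.1, q.2.1) ∧ x = |p.2.2 - q.2.2|}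
    ∪ {x | (p.1, p.2.1) = (q.2.1, q.1) ∧ x = |p.2.2 - (ℓ q.1 q.2.1 - q.2.2)|})


section WeightedDistance

variable {ℓ : V → V → ℝ} {H : SimpleGraph V}

lemma walkLen_nonneg (hnn : ∀ u v, 0 ≤ ℓ u v) {a b : V} (w : H.Walk a b) :
    0 ≤ walkLen ℓ w :=
  List.sum_nonneg <| by simp only [List.mem_map]; rintro _ ⟨d, -, rfl⟩; exact hnn _ _

@[simp] lemma walkLen_nil {a : V} : walkLen ℓ (Walk.nil : H.Walk a a) = 0 := by
  simp [walkLen]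

@[simp] lemma walkLen_cons {a b c : V} (h : H.Adj a b) (w : H.Walk b c) :
    walkLen ℓ (Walk.cons h w) = ℓ a b + walkLen ℓ w := by
  simp [walkLen]

@[simp] lemma walkLen_concat {a b c : V} (w : H.Walk a b) (h : H.Adj b c) :
    walkLen ℓ (w.concat h) = walkLen ℓ w + ℓ b c := by
  simp [walkLen, Walk.darts_concat]

@[simp] lemma walkLen_mapLe {H' : SimpleGraph V} (hle : H ≤ H') {a b : V} (w : H.Walk a b) :
    walkLen ℓ (w.mapLe hle) = walkLen ℓ w := by
  induction w <;> simp_all [Walk.mapLe]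

lemma gdist_le_walkLen (hnn : ∀ u v, 0 ≤ ℓ u v) {a b : V} (w : H.Walk a b) :
    gdist H ℓ a b ≤ walkLen ℓ w :=
  csInf_le ⟨0, by rintro _ ⟨w, rfl⟩; exact walkLen_nonneg hnn w⟩ ⟨w, rfl⟩

lemma le_gdist {a b : V} {c : ℝ} (hab : H.Reachable a b)
    (h : ∀ w : H.Walk a b, c ≤ walkLen ℓ w) : c ≤ gdist H ℓ a b := by
  obtain ⟨w⟩ := hab
  exact le_csInf ⟨_, w, rfl⟩ (by rintro _ ⟨w, rfl⟩; exact h w)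

lemma gdist_nonneg (hnn : ∀ u v, 0 ≤ ℓ u v) (a b : V) : 0 ≤ gdist H ℓ a b :=
  Real.sInf_nonneg <| by rintro _ ⟨w, rfl⟩; exact walkLen_nonneg hnn w

lemma gdist_self (hnn : ∀ u v, 0 ≤ ℓ u v) (a : V) : gdist H ℓ a a = 0 :=
  le_antisymm (by simpa using gdist_le_walkLen hnn (Walk.nil : H.Walk a a))
    (gdist_nonneg hnn a a)

lemma gdist_le_gdist_add_of_adj (hnn : ∀ u v, 0 ≤ ℓ u v) (s : V) {a b : V} (h : H.Adj a b) :
    gdist H ℓ s b ≤ gdist H ℓ s a + ℓ a b := by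
  by_cases hsa : H.Reachable s a
  · rw [← sub_le_iff_le_add]
    refine le_gdist hsa fun w => ?_
    simpa using gdist_le_walkLen hnn (w.concat h)
  · -- `b` is unreachable as well, so both distances are the junk value `sInf ∅ = 0`.
    have hsb : ¬H.Reachable s b := fun hsb => hsa (hsb.trans h.symm.reachable)
    have hempty : ∀ x, ¬H.Reachable s x → gdist H ℓ s x = 0 := fun x hx => by
      have : {y | ∃ w : H.Walk s x, walkLen ℓ w = y} = ∅ :=
        Set.eq_empty_of_forall_notMem fun _ ⟨w, _⟩ => hx w.reachable
      rw [gdist, this, Real.sInf_empty]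
    simp [hempty a hsa, hempty b hsb, hnn a b]

lemma abs_sub_gdist_le (hsym : ∀ u v, ℓ u v = ℓ v u) (hnn : ∀ u v, 0 ≤ ℓ u v) (s : V)
    {a b : V} (h : H.Adj a b) : |gdist H ℓ s a - gdist H ℓ s b| ≤ ℓ a b :=
  abs_sub_le_iff.2 ⟨by linarith [gdist_le_gdist_add_of_adj hnn s h.symm, hsym a b],
    by linarith [gdist_le_gdist_add_of_adj hnn s h]⟩

lemma gdist_le_gdist_of_le {H' : SimpleGraph V} (hle : H ≤ H') (hnn : ∀ u v, 0 ≤ ℓ u v)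
    {a b : V} (hab : H.Reachable a b) : gdist H' ℓ a b ≤ gdist H ℓ a b :=
  le_gdist hab fun w => by simpa using gdist_le_walkLen hnn (w.mapLe hle)

lemma le_add_walkLen_of_forall_adj {φ : V → ℝ} (hφ : ∀ a b, H.Adj a b → φ b ≤ φ a + ℓ a b)
    {a b : V} (w : H.Walk a b) : φ b ≤ φ a + walkLen ℓ w := by
  induction w with
  | nil => simp
  | cons h _ ih => have := hφ _ _ h; simp only [walkLen_cons]; linarith

lemma sub_le_gdist_of_forall_adj {φ : V → ℝ} (hφ : ∀ a b, H.Adj a b → φ b ≤ φ a + ℓ a b)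
    {a b : V} (hab : H.Reachable a b) : φ b - φ a ≤ gdist H ℓ a b :=
  le_gdist hab fun w => by linarith [le_add_walkLen_of_forall_adj hφ w]

lemma SimpleGraph.IsBridge.reachable_deleteEdges_or {s u v : V} (hbr : H.IsBridge s(u, v))
    (hsu : H.Reachable s u) :
    (H.deleteEdges {s(u, v)}).Reachable s u ∨ (H.deleteEdges {s(u, v)}).Reachable s v := by
  classical
  by_contra! h
  obtain ⟨p⟩ := hsu
  exact h.1 <| reachable_deleteEdges_iff_exists_walk.2
    ⟨p.bypass, p.bypass_isPath.isTrail.not_mem_edges_of_not_reachable h.2 hbr⟩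

lemma SimpleGraph.IsBridge.gdist_add_le (hnn : ∀ u v, 0 ≤ ℓ u v) {s u v : V}
    (hbr : H.IsBridge s(u, v)) (huv : H.Adj u v) (hsu : (H.deleteEdges {s(u, v)}).Reachable s u) :
    gdist H ℓ s u + ℓ u v ≤ gdist H ℓ s v := by
  classical
  set H' := H.deleteEdges {s(u, v)}
  have hsv : ¬H'.Reachable s v := fun hsv => hbr (hsu.symm.trans hsv)
  -- A potential that is `ℓ`-Lipschitz along the edges of `H` and jumps by `ℓ u v` across the
  -- bridge; its increase from `s` to `v` bounds every walk from below.
  let φ : V → ℝ := fun x =>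
    if H'.Reachable s x then gdist H' ℓ s x else gdist H' ℓ s u + ℓ u v + gdist H' ℓ v x
  have hφ : ∀ a b, H.Adj a b → φ b ≤ φ a + ℓ a b := by
    intro a b hab
    by_cases he : s(a, b) = s(u, v)
    · rcases Sym2.eq_iff.1 he with ⟨rfl, rfl⟩ | ⟨rfl, rfl⟩
      · simp [φ, hsu, hsv, gdist_self hnn]
      · simp only [φ, hsu, hsv, ↓reduceIte, gdist_self hnn, add_zero]
        linarith [hnn a b, hnn b a]
    · have hab' : H'.Adj a b := by simp [H', hab, he]
      by_cases hsa : H'.Reachable s a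
      · simpa [φ, hsa, hsa.trans hab'.reachable] using gdist_le_gdist_add_of_adj hnn s hab'
      · have hsb : ¬H'.Reachable s b := fun hsb => hsa (hsb.trans hab'.symm.reachable)
        simpa [φ, hsa, hsb, add_assoc] using gdist_le_gdist_add_of_adj hnn v hab'
  have hφv := sub_le_gdist_of_forall_adj hφ ((hsu.mono (deleteEdges_le _)).trans huv.reachable)
  simp only [φ, if_neg hsv, if_pos (Reachable.refl s), gdist_self hnn, sub_zero] at hφv
  linarith [gdist_le_gdist_of_le (deleteEdges_le _) hnn hsu]

lemma SimpleGraph.IsTree.le_abs_sub_gdist {T : SimpleGraph V} (hT : T.IsTree)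
    (hsym : ∀ u v, ℓ u v = ℓ v u) (hnn : ∀ u v, 0 ≤ ℓ u v) (s : V) {u v : V} (huv : T.Adj u v) :
    ℓ u v ≤ |gdist T ℓ s u - gdist T ℓ s v| := by
  have hbr : T.IsBridge s(u, v) := isAcyclic_iff_forall_adj_isBridge.1 hT.isAcyclic huv
  rcases hbr.reachable_deleteEdges_or (hT.connected.preconnected s u) with h | h
  · exact le_abs.2 (.inr (by linarith [hbr.gdist_add_le hnn huv h]))
  · rw [Sym2.eq_swap] at hbr h
    exact le_abs.2 (.inl (by linarith [hbr.gdist_add_le hnn huv.symm h, hsym u v]))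

end WeightedDistance

section PointDistances

variable {G T : SimpleGraph V} {ℓ : V → V → ℝ} {d : V → ℝ}

def pointDists (G : SimpleGraph V) (ℓ : V → V → ℝ) (d : V → ℝ) : Set ℝ :=
  {x | ∃ (u v : V) (lam : ℝ), G.Adj u v ∧ lam ∈ Set.Icc 0 (ℓ u v) ∧
    x = min (d u + lam) (d v + (ℓ u v - lam))}

def nonTreeOmegas (G T : SimpleGraph V) (ℓ : V → V → ℝ) (d : V → ℝ) : Set ℝ :=
  {x | ∃ u v : V, G.Adj u v ∧ ¬T.Adj u v ∧ x = (d u + ℓ u v + d v) / 2}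

lemma min_add_add_sub_le_half (a b L t : ℝ) : min (a + t) (b + (L - t)) ≤ (a + L + b) / 2 := by
  rw [min_le_iff]
  by_contra! h
  linarith [h.1, h.2]

lemma bddAbove_pointDists [Finite V] : BddAbove (pointDists G ℓ d) := by
  obtain ⟨M, hM⟩ := (Set.finite_range fun p : V × V => (d p.1 + ℓ p.1 p.2 + d p.2) / 2).bddAbove
  refine ⟨M, ?_⟩
  rintro _ ⟨u, v, lam, -, -, rfl⟩
  exact (min_add_add_sub_le_half _ _ _ _).trans (hM ⟨(u, v), rfl⟩)

lemma bddAbove_nonTreeOmegas [Finite V] : BddAbove (nonTreeOmegas G T ℓ d) :=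
  ((Set.finite_range fun p : V × V => (d p.1 + ℓ p.1 p.2 + d p.2) / 2).subset
    (by rintro _ ⟨u, v, -, -, rfl⟩; exact ⟨(u, v), rfl⟩)).bddAbove

lemma bddAbove_vertexDists [Finite V] : BddAbove {x | ∃ v, x = d v} :=
  ((Set.finite_range d).subset (by rintro _ ⟨v, rfl⟩; exact ⟨v, rfl⟩)).bddAbove

lemma sSup_pointDists_le [Finite V] (hd_nonneg : ∀ v, 0 ≤ d v)
    (hd_tree : ∀ u v, T.Adj u v → ℓ u v ≤ |d u - d v|) :
    sSup (pointDists G ℓ d) ≤ max (sSup {x | ∃ v, x = d v}) (sSup (nonTreeOmegas G T ℓ d)) := by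
  have hdA : ∀ v, d v ≤ sSup {x | ∃ v, x = d v} := fun v => le_csSup bddAbove_vertexDists ⟨v, rfl⟩
  have hA0 : 0 ≤ sSup {x | ∃ v, x = d v} :=
    Real.sSup_nonneg <| by rintro _ ⟨v, rfl⟩; exact hd_nonneg v
  refine Real.sSup_le ?_ (hA0.trans (le_max_left _ _))
  rintro _ ⟨u, v, lam, huv, ⟨hlam0, hlam⟩, rfl⟩
  by_cases hT : T.Adj u v
  · refine le_max_of_le_left ?_
    rcases le_abs.1 (hd_tree u v hT) with h | h
    · exact (min_le_right _ _).trans (by linarith [hdA u])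
    · exact (min_le_left _ _).trans (by linarith [hdA v])
  · exact le_max_of_le_right <| (min_add_add_sub_le_half _ _ _ _).trans
      (le_csSup bddAbove_nonTreeOmegas ⟨u, v, huv, hT, rfl⟩)

lemma le_sSup_pointDists [Finite V] (hG : G.Connected) {s : V} (hs : d s = 0)
    (hd_nonneg : ∀ v, 0 ≤ d v) (hd_lip : ∀ u v, G.Adj u v → |d u - d v| ≤ ℓ u v) :
    max (sSup {x | ∃ v, x = d v}) (sSup (nonTreeOmegas G T ℓ d)) ≤ sSup (pointDists G ℓ d) := by
  have hS0 : 0 ≤ sSup (pointDists G ℓ d) := Real.sSup_nonneg <| by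
    rintro _ ⟨u, v, lam, -, ⟨hlam0, hlam⟩, rfl⟩
    exact le_min (by linarith [hd_nonneg u]) (by linarith [hd_nonneg v])
  refine max_le (Real.sSup_le ?_ hS0) (Real.sSup_le ?_ hS0)
  · rintro _ ⟨v, rfl⟩
    rcases subsingleton_or_nontrivial V with hV | hV
    · exact (Subsingleton.elim v s ▸ hs).le.trans hS0
    · obtain ⟨u, hvu⟩ := hG.preconnected.exists_adj_of_nontrivial v
      have hlip := abs_sub_le_iff.1 (hd_lip v u hvu)
      refine le_csSup bddAbove_pointDists
        ⟨v, u, 0, hvu, ⟨le_rfl, (abs_nonneg _).trans (hd_lip v u hvu)⟩, ?_⟩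
      rw [min_eq_left] <;> linarith
  · rintro _ ⟨u, v, huv, -, rfl⟩
    have hlip := abs_sub_le_iff.1 (hd_lip u v huv)
    refine le_csSup bddAbove_pointDists
      ⟨u, v, (d v + ℓ u v - d u) / 2, huv, ⟨by linarith, by linarith⟩, ?_⟩
    rw [min_eq_left (by linarith)]
    ring

end PointDistances

theorem ecc_formula_general [Fintype V] (G : SimpleGraph V) (hG : G.Connected)
    (ℓ : V → V → ℝ) (hsym : ∀ u v, ℓ u v = ℓ v u) (hnn : ∀ u v, 0 ≤ ℓ u v)
    (s : V) (T : SimpleGraph V) (hT : T.IsTree)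
    (hsp : ∀ x : V, gdist T ℓ s x = gdist G ℓ s x) :
    sSup {x | ∃ (u v : V) (lam : ℝ), G.Adj u v ∧ lam ∈ Set.Icc 0 (ℓ u v) ∧
        x = min (gdist G ℓ s u + lam) (gdist G ℓ s v + (ℓ u v - lam))}
    = max (sSup {x | ∃ v : V, x = gdist G ℓ s v})
          (sSup {x | ∃ u v : V, G.Adj u v ∧ ¬ T.Adj u v ∧
              x = (gdist G ℓ s u + ℓ u v + gdist G ℓ s v) / 2}) := by
  have hd_tree : ∀ u v, T.Adj u v → ℓ u v ≤ |gdist G ℓ s u - gdist G ℓ s v| :=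
    fun u v huv => by simpa only [hsp] using hT.le_abs_sub_gdist hsym hnn s huv
  exact le_antisymm (sSup_pointDists_le (gdist_nonneg hnn s) hd_tree)
    (le_sSup_pointDists hG (gdist_self hnn s) (gdist_nonneg hnn s)
      fun u v huv => abs_sub_gdist_le hsym hnn s huv)

/-- Let `𝒢` be the continuous graph of a connected weighted graph `G`, `s` a source
(a vertex of `𝒢`; in the paper the source is inserted as a vertex), and `T` a
shortest-path tree rooted at `s` spanning `V(G)`.  For each edge `xy ∉ E(T)` let
`ω_s(xy) = (d(s,x) + ℓ(xy) + d(s,y))/2`.  Then the eccentricity of `s` in `𝒢`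
(the supremum of `d_𝒢(s,q)` over all points `q` of the continuous graph, where the
distance from `s` to the point of edge `uv` at offset `λ` is
`min(d(s,u)+λ, d(s,v)+ℓ(uv)−λ)`) satisfies
`ecc(s,𝒢) = max(max_{x ∈ V} d(s,x), max_{xy ∉ E(T)} ω_s(xy))`. -/
theorem ecc_formula [Fintype V] (G : SimpleGraph V) (hG : G.Connected)
    (ℓ : V → V → ℝ) (hsym : ∀ u v, ℓ u v = ℓ v u) (hnn : ∀ u v, 0 ≤ ℓ u v)
    (s : V) (T : SimpleGraph V) (hTG : T ≤ G) (hT : T.IsTree)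
    (hsp : ∀ x : V, gdist T ℓ s x = gdist G ℓ s x) :
    sSup {x | ∃ (u v : V) (lam : ℝ), G.Adj u v ∧ lam ∈ Set.Icc 0 (ℓ u v) ∧
        x = min (gdist G ℓ s u + lam) (gdist G ℓ s v + (ℓ u v - lam))}
    = max (sSup {x | ∃ v : V, x = gdist G ℓ s v})
          (sSup {x | ∃ u v : V, G.Adj u v ∧ ¬ T.Adj u v ∧
              x = (gdist G ℓ s u + ℓ u v + gdist G ℓ s v) / 2}) :=
  ecc_formula_general G hG ℓ hsym hnn s T hT hsp
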